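/- arXiv:2210.02972 — 6 statements merged into one kernel-verified Lean document; each statement's English description precedes it below -/
import Mathlib

section
/- For every prime p, a group of order p³ has at most 2p² + 2p + 4 subgroups. -/
/-!
Sort the subgroups of `P` by order `1, p, p², p³`. There is one subgroup of order `1` and one of
order `p³`. A subgroup of order `p` is generated by each of its `p - 1` nonidentity elements,
so there are at most `(p³ - 1)/(p - 1) = p² + p + 1` of them. A subgroup of order `p²`
has index `p`, so it is normal and is the kernel of `p - 1` homomorphisms `P → ℤ/p`. Since `P`
is generated by three elements, there are at most `p³` such homomorphisms, and at most
`p² + p + 1` subgroups of order `p²`.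
-/

open Subgroup

lemma le_sq_add_add_one_of_mul_sub_one_lt_pow_three {p n : ℕ} (hp : 2 ≤ p)
    (h : n * (p - 1) < p ^ 3) : n ≤ p ^ 2 + p + 1 := by
  obtain ⟨q, rfl⟩ : ∃ q, p = q + 1 := ⟨p - 1, by omega⟩
  rw [Nat.add_sub_cancel] at h
  by_contra! hn
  nlinarith

lemma card_mul_lt_card_of_le_card_fiber {α β : Type*} [Finite α] [Finite β] (f : α → β)
    (q : β → Prop) (n : ℕ) (hn : ∀ b, q b → n ≤ Nat.card {a // f a = b}) {a₀ : α}
    (ha₀ : ¬q (f a₀)) : Nat.card {b // q b} * n < Nat.card α := by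
  have := Fintype.ofFinite {b // q b}
  calc Nat.card {b // q b} * n = ∑ b : {b // q b}, n := by simp [Nat.card_eq_fintype_card]
    _ ≤ ∑ b : {b // q b}, Nat.card {a // f a = b} := Finset.sum_le_sum fun b _ => hn b b.2
    _ = Nat.card {a // q (f a)} := by
      rw [← Nat.card_sigma]
      exact Nat.card_congr (Equiv.sigmaSubtypeFiberEquivSubtype f fun _ => Iff.rfl)
    _ < Nat.card α := Finite.card_subtype_lt ha₀

section

variable {G : Type*} [Group G] {p n : ℕ}

lemma zpowers_pow_eq_zpowers_of_coprime {x : G} {k : ℕ} (hk : k.Coprime (orderOf x)) :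
    zpowers (x ^ k) = zpowers x := by
  obtain ⟨m, hm⟩ := exists_pow_eq_self_of_coprime hk
  refine le_antisymm (zpowers_le.mpr (pow_mem (mem_zpowers x) k)) (zpowers_le.mpr ?_)
  simpa only [hm] using pow_mem (mem_zpowers (x ^ k)) m

lemma sub_one_le_card_zpowers_eq_zpowers [Finite G] (hp : p.Prime) {x : G} (hx : orderOf x = p) :
    p - 1 ≤ Nat.card {y : G // zpowers y = zpowers x} := by
  let g : Fin (p - 1) → {y : G // zpowers y = zpowers x} := fun c =>
    ⟨x ^ (c + 1 : ℕ), zpowers_pow_eq_zpowers_of_coprime <| by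
      rw [hx, Nat.coprime_comm]
      exact Nat.coprime_of_lt_prime c.val.succ_ne_zero (by omega) hp⟩
  have hg : Function.Injective g := by
    intro c c' h
    have := pow_injOn_Iio_orderOf (x := x) (by rw [Set.mem_Iio, hx]; omega)
      (by rw [Set.mem_Iio, hx]; omega) (congrArg Subtype.val h)
    exact Fin.ext (by simpa using this)
  simpa using Nat.card_le_card_of_injective g hg

lemma card_subgroups_of_card_eq_prime_mul_sub_one_lt [Finite G] (hp : p.Prime) :
    Nat.card {H : Subgroup G // Nat.card H = p} * (p - 1) < Nat.card G := by
  have : Fact p.Prime := ⟨hp⟩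
  refine card_mul_lt_card_of_le_card_fiber zpowers _ _ (fun H hH => ?_) (a₀ := 1)
    (by simp [hp.one_lt.ne])
  obtain ⟨x, hx1⟩ := (ne_bot_iff_exists_ne_one (H := H)).mp
    ((one_lt_card_iff_ne_bot H).mp (hH ▸ hp.one_lt))
  have hx : orderOf (x : G) = p := by
    rw [orderOf_coe]
    exact orderOf_eq_prime (hH ▸ pow_card_eq_one') hx1
  have hxH : zpowers (x : G) = H :=
    eq_of_le_of_card_ge (zpowers_le.mpr x.2) (by rw [hH, Nat.card_zpowers, hx])
  simpa only [hxH] using sub_one_le_card_zpowers_eq_zpowers hp hx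

lemma MonoidHom.ker_le_ker_of_mem_zpowers {M : Type*} [CommGroup M] {f g : G →* M}
    (h : g ∈ zpowers f) : f.ker ≤ g.ker := by
  obtain ⟨k, rfl⟩ := mem_zpowers_iff.mp h
  intro x hx
  rw [MonoidHom.mem_ker] at hx ⊢
  rw [MonoidHom.zpow_apply, hx, one_zpow]

lemma MonoidHom.ker_eq_ker_of_zpowers_eq {M : Type*} [CommGroup M] {f g : G →* M}
    (h : zpowers g = zpowers f) : g.ker = f.ker :=
  le_antisymm (ker_le_ker_of_mem_zpowers (h ▸ mem_zpowers f))
    (ker_le_ker_of_mem_zpowers (h ▸ mem_zpowers g))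

lemma MonoidHom.orderOf_eq_of_card_eq {M : Type*} [CommGroup M] [Fact p.Prime]
    (hM : Nat.card M = p) {f : G →* M} (hf : f ≠ 1) : orderOf f = p :=
  orderOf_eq_prime (ext fun x => by simp [← hM, pow_card_eq_one']) hf

lemma exists_monoidHom_ker_eq_of_index_eq [Fact p.Prime] {H : Subgroup G} [H.Normal]
    (hH : H.index = p) :
    ∃ f : G →* Multiplicative (ZMod p), f.ker = H := by
  let e : G ⧸ H ≃* Multiplicative (ZMod p) :=
    mulEquivOfPrimeCardEq (by rw [← index_eq_card, hH]) (by simp)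
  exact ⟨e.toMonoidHom.comp (QuotientGroup.mk' H), by ext; simp⟩

lemma card_normal_subgroups_of_index_eq_prime_mul_sub_one_lt [Finite G] (hp : p.Prime) :
    Nat.card {H : Subgroup G // H.Normal ∧ H.index = p} * (p - 1) <
      Nat.card (G →* Multiplicative (ZMod p)) := by
  have : Fact p.Prime := ⟨hp⟩
  have : Finite (G →* Multiplicative (ZMod p)) := .of_injective _ DFunLike.coe_injective
  refine card_mul_lt_card_of_le_card_fiber MonoidHom.ker _ _ (fun H ⟨_, hH⟩ => ?_) (a₀ := 1)
    (by simp [hp.one_lt.ne])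
  obtain ⟨f, rfl⟩ := exists_monoidHom_ker_eq_of_index_eq hH
  have hf : f ≠ 1 := by
    rintro rfl
    simp [hp.one_lt.ne] at hH
  calc p - 1 ≤ Nat.card {g : G →* Multiplicative (ZMod p) // zpowers g = zpowers f} :=
        sub_one_le_card_zpowers_eq_zpowers hp (MonoidHom.orderOf_eq_of_card_eq (by simp) hf)
    _ ≤ Nat.card {g : G →* Multiplicative (ZMod p) // g.ker = f.ker} :=
        Nat.card_le_card_of_injective _
          (Subtype.impEmbedding _ _ fun _ => MonoidHom.ker_eq_ker_of_zpowers_eq).injective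

lemma card_mul_prime_le_card_of_lt (hp : p.Prime) (hG : Nat.card G = p ^ n) {H K : Subgroup G}
    (hHK : H < K) : Nat.card H * p ≤ Nat.card K := by
  have : Finite G := Nat.finite_of_card_ne_zero (by simp [hG, hp.ne_zero])
  obtain ⟨i, -, hi⟩ := (Nat.dvd_prime_pow hp).mp (hG ▸ card_subgroup_dvd_card H)
  obtain ⟨j, -, hj⟩ := (Nat.dvd_prime_pow hp).mp (hG ▸ card_subgroup_dvd_card K)
  have hlt : Nat.card H < Nat.card K := (card_le_of_le hHK.le).lt_of_ne
    fun h => hHK.ne (eq_of_le_of_card_ge hHK.le h.ge)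
  rw [hi, hj] at hlt ⊢
  rw [← pow_succ]
  exact Nat.pow_le_pow_right hp.pos ((Nat.pow_lt_pow_iff_right hp.one_lt).mp hlt)

lemma exists_finset_card_le_closure_eq_top_of_card_eq_prime_pow (hp : p.Prime)
    (hG : Nat.card G = p ^ n) : ∃ s : Finset G, s.card ≤ n ∧ closure (s : Set G) = ⊤ := by
  have : Finite G := Nat.finite_of_card_ne_zero (by simp [hG, hp.ne_zero])
  suffices ∀ k, ∃ s : Finset G, s.card ≤ k ∧
      (closure (s : Set G) = ⊤ ∨ p ^ k ≤ Nat.card (closure (s : Set G))) by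
    obtain ⟨s, hsn, hs | hs⟩ := this n
    · exact ⟨s, hsn, hs⟩
    · refine ⟨s, hsn, (card_eq_iff_eq_top _).mp (le_antisymm (card_le_card_group _) ?_)⟩
      rwa [hG]
  intro k
  induction k with
  | zero => exact ⟨∅, le_rfl, .inr (by simp)⟩
  | succ k ih =>
    obtain ⟨s, hsk, hs | hs⟩ := ih
    · exact ⟨s, hsk.trans k.le_succ, .inl hs⟩
    by_cases htop : closure (s : Set G) = ⊤
    · exact ⟨s, hsk.trans k.le_succ, .inl htop⟩
    classical
    obtain ⟨x, hx⟩ : ∃ x, x ∉ closure (s : Set G) := by simpa [eq_top_iff'] using htop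
    have hlt : closure (s : Set G) < closure ((insert x s : Finset G) : Set G) :=
      (Subgroup.closure_mono (by simp)).lt_of_ne fun h => hx (h ▸ subset_closure (by simp))
    refine ⟨insert x s, (Finset.card_insert_le x s).trans (by omega), .inr ?_⟩
    calc p ^ (k + 1) = p ^ k * p := pow_succ p k
      _ ≤ Nat.card (closure (s : Set G)) * p := Nat.mul_le_mul_right p hs
      _ ≤ _ := card_mul_prime_le_card_of_lt hp hG hlt

lemma card_monoidHom_le_pow_of_closure_eq_top {M : Type*} [Monoid M] [Finite M]
    {s : Finset G} (hs : closure (s : Set G) = ⊤) :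
    Nat.card (G →* M) ≤ Nat.card M ^ s.card := by
  have hinj : Function.Injective fun (f : G →* M) (x : s) => f x :=
    fun f g hfg => MonoidHom.eq_of_eqOn_dense hs fun x hx => congrFun hfg ⟨x, hx⟩
  simpa [Nat.card_fun] using Nat.card_le_card_of_injective _ hinj

lemma normal_and_index_eq_of_card_eq (hp : p.Prime) (hG : Nat.card G = p ^ (n + 1))
    {H : Subgroup G} (hH : Nat.card H = p ^ n) : H.Normal ∧ H.index = p := by
  have hindex : H.index = p := by
    have := card_mul_index H
    rw [hH, hG, pow_succ] at this
    exact Nat.eq_of_mul_eq_mul_left (pow_pos hp.pos n) this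
  exact ⟨normal_of_index_eq_minFac_card (by rw [hG, hp.pow_minFac n.succ_ne_zero, hindex]),
    hindex⟩

lemma card_subgroups_of_card_eq_pow_mul_sub_one_lt (hp : p.Prime)
    (hG : Nat.card G = p ^ (n + 1)) :
    Nat.card {H : Subgroup G // Nat.card H = p ^ n} * (p - 1) < p ^ (n + 1) := by
  have : Fact p.Prime := ⟨hp⟩
  have : Finite G := Nat.finite_of_card_ne_zero (by simp [hG, hp.ne_zero])
  obtain ⟨s, hsn, hs⟩ := exists_finset_card_le_closure_eq_top_of_card_eq_prime_pow hp hG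
  calc Nat.card {H : Subgroup G // Nat.card H = p ^ n} * (p - 1)
      ≤ Nat.card {H : Subgroup G // H.Normal ∧ H.index = p} * (p - 1) := by
        gcongr
        exact Nat.card_le_card_of_injective _ (Subtype.impEmbedding _ _
          fun H hH => normal_and_index_eq_of_card_eq hp hG hH).injective
    _ < Nat.card (G →* Multiplicative (ZMod p)) :=
        card_normal_subgroups_of_index_eq_prime_mul_sub_one_lt hp
    _ ≤ Nat.card (Multiplicative (ZMod p)) ^ s.card := card_monoidHom_le_pow_of_closure_eq_top hs
    _ ≤ p ^ (n + 1) := by simpa using Nat.pow_le_pow_right hp.pos hsn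

lemma card_subgroup_le_sum_card_eq_pow (hp : p.Prime) (hG : Nat.card G = p ^ n) :
    Nat.card (Subgroup G) ≤
      ∑ k ∈ Finset.range (n + 1), Nat.card {H : Subgroup G // Nat.card H = p ^ k} := by
  classical
  have : Finite G := Nat.finite_of_card_ne_zero (by simp [hG, hp.ne_zero])
  have := Fintype.ofFinite (Subgroup G)
  have hcover : (Finset.univ : Finset (Subgroup G)) ⊆
      (Finset.range (n + 1)).biUnion fun k => {H | Nat.card H = p ^ k} := by
    intro H _
    obtain ⟨k, hk, hH⟩ := (Nat.dvd_prime_pow hp).mp (hG ▸ card_subgroup_dvd_card H)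
    simpa [Nat.lt_succ_iff] using ⟨k, hk, hH⟩
  simp only [Nat.card_eq_fintype_card, Fintype.card_subtype]
  exact (Finset.card_le_card hcover).trans Finset.card_biUnion_le

end

theorem subgroups_of_p_cubed (p : ℕ) (hp : p.Prime)
    (P : Type*) [Group P] (hP : Nat.card P = p ^ 3) :
    Nat.card (Subgroup P) ≤ 2 * p ^ 2 + 2 * p + 4 := by
  have : Finite P := Nat.finite_of_card_ne_zero (by simp [hP, hp.ne_zero])
  have h0 : Nat.card {H : Subgroup P // Nat.card H = p ^ 0} = 1 := by
    simp only [pow_zero, card_eq_one, Nat.card_unique]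
  have h1 : Nat.card {H : Subgroup P // Nat.card H = p ^ 1} ≤ p ^ 2 + p + 1 :=
    le_sq_add_add_one_of_mul_sub_one_lt_pow_three hp.two_le
      (by simpa [hP] using card_subgroups_of_card_eq_prime_mul_sub_one_lt (G := P) hp)
  have h2 : Nat.card {H : Subgroup P // Nat.card H = p ^ 2} ≤ p ^ 2 + p + 1 :=
    le_sq_add_add_one_of_mul_sub_one_lt_pow_three hp.two_le
      (card_subgroups_of_card_eq_pow_mul_sub_one_lt hp hP)
  have h3 : Nat.card {H : Subgroup P // Nat.card H = p ^ 3} = 1 := by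
    simp only [← hP, card_eq_iff_eq_top, Nat.card_unique]
  calc Nat.card (Subgroup P)
      ≤ ∑ k ∈ Finset.range 4, Nat.card {H : Subgroup P // Nat.card H = p ^ k} :=
        card_subgroup_le_sum_card_eq_pow hp hP
    _ ≤ 1 + (p ^ 2 + p + 1) + (p ^ 2 + p + 1) + 1 := by
        simp only [Finset.sum_range_succ, Finset.sum_range_zero, h0, h3]
        omega
    _ = 2 * p ^ 2 + 2 * p + 4 := by ring
end

section
/- For every prime p, a group of order p⁴ has at most p⁴ + 3p³ + 4p² + 3p + 5 subgroups. -/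
/-! A nontrivial element of `P` lies in at most one subgroup of order `p`, and in at most
`p² + p + 1` subgroups of order `p²`: a subgroup `H ∋ x` of order `p²` with `x` of order `p` equals
`⟨x⟩ ⊔ ⟨y⟩` for each of the `p² - p` elements `y ∈ H \ ⟨x⟩`. Double counting incidences then bounds
the subgroups of order `p` and `p²` by `[4,1]_p` and `[4,2]_p`. A subgroup of order `p³` has index `p`,
so it is normal and is the kernel of exactly `p - 1` nontrivial homomorphisms `P →* ℂˣ`; as there are
at most `|P|` such homomorphisms, there are at most `[4,3]_p` of these subgroups. -/

open Finset
open scoped Classical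

section

variable {G : Type*} [Group G]

theorem eq_sup_zpowers_of_card_eq_prime_mul [Finite G] {p : ℕ} (hp : p.Prime) {K H : Subgroup G}
    (hKH : K ≤ H) (hH : Nat.card H = p * Nat.card K) {y : G} (hyH : y ∈ H) (hyK : y ∉ K) :
    H = K ⊔ Subgroup.zpowers y := by
  set L := K ⊔ Subgroup.zpowers y
  have hLH : L ≤ H := sup_le hKH (Subgroup.zpowers_le.mpr hyH)
  obtain ⟨m, hm⟩ := Subgroup.card_dvd_of_le (le_sup_left : K ≤ L)
  have hmp : m ∣ p := by
    have := Subgroup.card_dvd_of_le hLH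
    rw [hm, hH, mul_comm p] at this
    exact Nat.dvd_of_mul_dvd_mul_left Nat.card_pos this
  rcases (Nat.dvd_prime hp).mp hmp with rfl | rfl
  · have hKL : K = L := Subgroup.eq_of_le_of_card_ge le_sup_left (by rw [hm, mul_one])
    exact absurd (hKL ▸ Subgroup.mem_sup_right (Subgroup.mem_zpowers y)) hyK
  · exact (Subgroup.eq_of_le_of_card_ge hLH (by rw [hm, hH, mul_comm])).symm

theorem card_monoidHom_units_complex [Finite G] :
    Nat.card (G →* ℂˣ) = Nat.card (Abelianization G) := by
  have : NeZero (Monoid.exponent (Abelianization G)) := ⟨Monoid.exponent_ne_zero_of_finite⟩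
  rw [Nat.card_congr Abelianization.lift, CommGroup.card_monoidHom_of_hasEnoughRootsOfUnity]

theorem prime_sub_one_le_card_ker_eq [Fintype (G →* ℂˣ)] {p : ℕ} (hp : p.Prime)
    (H : Subgroup G) [H.Normal] (hH : H.index = p) :
    p - 1 ≤ #{f : G →* ℂˣ | f ≠ 1 ∧ f.ker = H} := by
  have hQ : Nat.card (G ⧸ H) = p := H.index_eq_card ▸ hH
  have : Fact (Nat.card (G ⧸ H)).Prime := ⟨hQ ▸ hp⟩
  have : NeZero (Nat.card (G ⧸ H)) := ⟨hQ ▸ hp.ne_zero⟩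
  have : Finite (G ⧸ H) := Nat.finite_of_card_ne_zero (NeZero.ne _)
  have : IsCyclic (G ⧸ H) := isCyclic_of_prime_card rfl
  let _ : CommGroup (G ⧸ H) := IsCyclic.commGroup
  have : Fintype (G ⧸ H →* ℂˣ) := Fintype.ofFinite _
  have hcard : #{φ : G ⧸ H →* ℂˣ | φ ≠ 1} = p - 1 := by
    rw [filter_ne', card_erase_of_mem (mem_univ _), card_univ, ← Nat.card_eq_fintype_card,
      Nat.card_congr (IsCyclic.monoidHom_equiv_self (G ⧸ H) ℂ).some.toEquiv, hQ]
  rw [← hcard]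
  refine card_le_card_of_injOn (fun φ => φ.comp (QuotientGroup.mk' H)) (fun φ hφ => ?_)
    (fun φ _ ψ _ h => (MonoidHom.cancel_right (QuotientGroup.mk'_surjective H)).mp h)
  replace hφ : φ ≠ 1 := by simpa using hφ
  have hker : φ.ker = ⊥ := (φ.ker.eq_bot_or_eq_top_of_prime_card).resolve_right
    (fun h => hφ (MonoidHom.ker_eq_top_iff.mp h))
  have hker' : (φ.comp (QuotientGroup.mk' H)).ker = H := by
    rw [← MonoidHom.comap_ker, hker, MonoidHom.comap_bot, QuotientGroup.ker_mk']
  have hne : φ.comp (QuotientGroup.mk' H) ≠ 1 := fun h1 => hp.ne_one <| by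
    rw [← hH, ← hker', h1, MonoidHom.ker_one, Subgroup.index_top]
  exact mem_filter.mpr ⟨mem_univ _, hne, hker'⟩

variable [Fintype G]

theorem card_filter_mem_subgroup (H : Subgroup G) : #{x : G | x ∈ H} = Nat.card H := by
  rw [Nat.card_eq_fintype_card, Fintype.card_subtype]

theorem card_subgroups_card_eq_one : #{H : Subgroup G | Nat.card H = 1} = 1 := by
  refine card_eq_one.mpr ⟨⊥, ?_⟩
  ext H
  simp only [mem_filter, mem_univ, true_and, mem_singleton, Subgroup.card_eq_one]

theorem card_subgroups_card_eq_card : #{H : Subgroup G | Nat.card H = Nat.card G} = 1 := by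
  refine card_eq_one.mpr ⟨⊤, ?_⟩
  ext H
  simp only [mem_filter, mem_univ, true_and, mem_singleton, Subgroup.card_eq_iff_eq_top]

theorem card_overgroups_of_prime_relIndex_mul_le {p : ℕ} (hp : p.Prime) (K : Subgroup G) :
    #{H : Subgroup G | K ≤ H ∧ Nat.card H = p * Nat.card K} * (p * Nat.card K - Nat.card K)
      ≤ Nat.card G - Nat.card K := by
  calc _ ≤ #{y : G | y ∉ K} * 1 := by
        refine card_mul_le_card_mul (fun H y => y ∈ H) (fun H hH => ?_) (fun y hy => ?_)
        · obtain ⟨hKH, hH⟩ := (mem_filter.mp hH).2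
          have : bipartiteAbove (fun H y => y ∈ H) {y : G | y ∉ K} H
              = univ.filter (· ∈ H) \ univ.filter (· ∈ K) := by
            ext y; simp [and_comm]
          rw [this, card_sdiff_of_subset (monotone_filter_right _ fun _ _ hy => hKH hy),
            card_filter_mem_subgroup, card_filter_mem_subgroup, hH]
        · refine card_le_one.mpr fun H₁ h₁ H₂ h₂ => ?_
          simp only [mem_bipartiteBelow, mem_filter, mem_univ, true_and] at h₁ h₂ hy
          rw [eq_sup_zpowers_of_card_eq_prime_mul hp h₁.1.1 h₁.1.2 h₁.2 hy,
            eq_sup_zpowers_of_card_eq_prime_mul hp h₂.1.1 h₂.1.2 h₂.2 hy]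
    _ = Nat.card G - Nat.card K := by
        rw [mul_one, filter_not, card_sdiff_of_subset (filter_subset _ _), card_univ,
          ← Nat.card_eq_fintype_card, card_filter_mem_subgroup]

theorem card_subgroups_card_eq_prime_mul_le {p : ℕ} (hp : p.Prime) :
    #{H : Subgroup G | Nat.card H = p} * (p - 1) ≤ Nat.card G - 1 := by
  simpa using card_overgroups_of_prime_relIndex_mul_le hp (⊥ : Subgroup G)

theorem card_subgroups_card_eq_sq_containing_mul_le {p : ℕ} (hp : p.Prime) {x : G} (hx : x ≠ 1) :
    #{H : Subgroup G | Nat.card H = p ^ 2 ∧ x ∈ H} * (p ^ 2 - p) ≤ Nat.card G - p := by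
  by_cases hex : ∃ H : Subgroup G, Nat.card H = p ^ 2 ∧ x ∈ H
  swap
  · push Not at hex
    rw [filter_false_of_mem fun H _ h => hex H h.1 h.2, card_empty, zero_mul]
    exact Nat.zero_le _
  obtain ⟨H₀, hH₀, hxH₀⟩ := hex
  obtain ⟨k, hk, hxk⟩ := (Nat.dvd_prime_pow hp).mp (hH₀ ▸ Subgroup.orderOf_dvd_natCard H₀ hxH₀)
  interval_cases k
  · exact absurd (orderOf_eq_one_iff.mp (by simpa using hxk)) hx
  · have hK : Nat.card (Subgroup.zpowers x) = p := by rw [Nat.card_zpowers, hxk, pow_one]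
    have := card_overgroups_of_prime_relIndex_mul_le hp (Subgroup.zpowers x)
    rw [hK, ← sq] at this
    convert this using 4 with H
    rw [Subgroup.zpowers_le, and_comm]
  · have hsub : univ.filter (fun H : Subgroup G => Nat.card H = p ^ 2 ∧ x ∈ H)
        ⊆ ({Subgroup.zpowers x} : Finset (Subgroup G)) := by
      intro H hH
      obtain ⟨hH, hxH⟩ := (mem_filter.mp hH).2
      exact mem_singleton.mpr (Subgroup.eq_of_le_of_card_ge (Subgroup.zpowers_le.mpr hxH)
        (by rw [hH, Nat.card_zpowers, hxk])).symm
    have hG : p ^ 2 ≤ Nat.card G :=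
      hH₀ ▸ Nat.le_of_dvd Nat.card_pos (Subgroup.card_subgroup_dvd_card H₀)
    calc _ ≤ 1 * (p ^ 2 - p) :=
          Nat.mul_le_mul_right _ ((card_le_card hsub).trans (card_singleton _).le)
      _ ≤ Nat.card G - p := by omega

theorem card_subgroups_card_eq_sq_mul_le {p : ℕ} (hp : p.Prime) :
    #{H : Subgroup G | Nat.card H = p ^ 2} * ((p ^ 2 - 1) * (p ^ 2 - p))
      ≤ (Nat.card G - 1) * (Nat.card G - p) := by
  have hdouble := sum_card_bipartiteAbove_eq_sum_card_bipartiteBelow (fun H (x : G) => x ∈ H)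
    (s := {H : Subgroup G | Nat.card H = p ^ 2}) (t := univ.erase 1)
  have habove : ∀ H ∈ ({H : Subgroup G | Nat.card H = p ^ 2} : Finset _),
      #(bipartiteAbove (fun H (x : G) => x ∈ H) (univ.erase 1) H) = p ^ 2 - 1 := by
    intro H hH
    rw [bipartiteAbove, filter_erase, card_erase_of_mem (by simp [H.one_mem]),
      card_filter_mem_subgroup, (mem_filter.mp hH).2]
  calc _ = (∑ H ∈ ({H : Subgroup G | Nat.card H = p ^ 2} : Finset _),
        #(bipartiteAbove (fun H (x : G) => x ∈ H) (univ.erase 1) H)) * (p ^ 2 - p) := by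
        rw [sum_congr rfl habove, sum_const, smul_eq_mul, mul_assoc]
    _ = ∑ x ∈ univ.erase (1 : G),
          #{H : Subgroup G | Nat.card H = p ^ 2 ∧ x ∈ H} * (p ^ 2 - p) := by
        rw [hdouble, sum_mul]
        simp only [bipartiteBelow, filter_filter]
    _ ≤ ∑ x ∈ univ.erase (1 : G), (Nat.card G - p) :=
        sum_le_sum fun x hx => card_subgroups_card_eq_sq_containing_mul_le hp (ne_of_mem_erase hx)
    _ = (Nat.card G - 1) * (Nat.card G - p) := by
        rw [sum_const, smul_eq_mul, card_erase_of_mem (mem_univ _), card_univ,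
          Nat.card_eq_fintype_card]

theorem card_normal_index_eq_prime_mul_le {p : ℕ} (hp : p.Prime) :
    #{H : Subgroup G | H.Normal ∧ H.index = p} * (p - 1) ≤ Nat.card G - 1 := by
  have : Finite (G →* ℂˣ) := Nat.finite_of_card_ne_zero
    (by rw [card_monoidHom_units_complex]; exact Nat.card_pos.ne')
  have : Fintype (G →* ℂˣ) := Fintype.ofFinite _
  calc _ ≤ #{f : G →* ℂˣ | f ≠ 1} * 1 := by
        refine card_mul_le_card_mul (fun H f => f.ker = H) (fun H hH => ?_) (fun f _ => ?_)
        · obtain ⟨hN, hH⟩ := (mem_filter.mp hH).2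
          refine (prime_sub_one_le_card_ker_eq hp H hH).trans (card_le_card fun f hf => ?_)
          simpa [mem_bipartiteAbove] using hf
        · exact card_le_one.mpr fun H₁ h₁ H₂ h₂ => by
            simp only [mem_bipartiteBelow] at h₁ h₂
            rw [← h₁.2, ← h₂.2]
    _ ≤ Nat.card G - 1 := by
        rw [mul_one, filter_ne', card_erase_of_mem (mem_univ _), card_univ,
          ← Nat.card_eq_fintype_card, card_monoidHom_units_complex]
        exact Nat.sub_le_sub_right (Nat.card_le_card_of_surjective _ QuotientGroup.mk_surjective) 1

theorem card_subgroups_card_eq_pow_le_card_normal_index_eq {p n : ℕ} (hp : p.Prime)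
    (hG : Nat.card G = p ^ (n + 1)) :
    #{H : Subgroup G | Nat.card H = p ^ n} ≤ #{H : Subgroup G | H.Normal ∧ H.index = p} := by
  refine card_le_card (monotone_filter_right _ fun H _ hH => ?_)
  have hindex : H.index = p := by
    have := H.card_mul_index
    rw [hH, hG, pow_succ] at this
    exact Nat.eq_of_mul_eq_mul_left (pow_pos hp.pos n) this
  exact ⟨Subgroup.normal_of_index_eq_minFac_card (by rw [hG, hp.pow_minFac n.succ_ne_zero, hindex]),
    hindex⟩

theorem card_subgroup_eq_sum_card_eq_pow {p n : ℕ} (hp : p.Prime) (hG : Nat.card G = p ^ n) :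
    Nat.card (Subgroup G) = ∑ k ∈ range (n + 1), #{H : Subgroup G | Nat.card H = p ^ k} := by
  rw [Nat.card_eq_fintype_card, ← card_univ,
    card_eq_sum_card_fiberwise (f := fun H : Subgroup G => Nat.card H)
      (t := (range (n + 1)).image (p ^ ·)) fun H _ => ?_,
    sum_image fun a _ b _ h => Nat.pow_right_injective hp.two_le h]
  obtain ⟨k, hk, hH⟩ := (Nat.dvd_prime_pow hp).mp (hG ▸ H.card_subgroup_dvd_card)
  exact mem_image.mpr ⟨k, mem_range.mpr (Nat.lt_succ_of_le hk), hH.symm⟩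

end

theorem le_of_mul_sub_one_le_pow_four_sub_one {p a : ℕ} (hp : 1 < p)
    (h : a * (p - 1) ≤ p ^ 4 - 1) : a ≤ p ^ 3 + p ^ 2 + p + 1 := by
  refine Nat.le_of_mul_le_mul_right (h.trans_eq ?_) (Nat.sub_pos_of_lt hp)
  zify [hp.le, Nat.one_le_pow 4 p (by omega)]
  ring

theorem le_of_mul_le_pow_four_sub_one_mul_sub {p a : ℕ} (hp : 1 < p)
    (h : a * ((p ^ 2 - 1) * (p ^ 2 - p)) ≤ (p ^ 4 - 1) * (p ^ 4 - p)) :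
    a ≤ (p ^ 2 + 1) * (p ^ 2 + p + 1) := by
  have hp2 : p < p ^ 2 := lt_self_pow₀ hp (by norm_num)
  have hp4 : p < p ^ 4 := lt_self_pow₀ hp (by norm_num)
  refine Nat.le_of_mul_le_mul_right (h.trans_eq ?_) (Nat.mul_pos (by omega) (by omega))
  zify [hp.le, hp2.le, hp4.le, hp.le.trans hp2.le, hp.le.trans hp4.le]
  ring

theorem subgroups_of_p_fourth (p : ℕ) (hp : p.Prime)
    (P : Type*) [Group P] (hP : Nat.card P = p ^ 4) :
    Nat.card (Subgroup P) ≤ p ^ 4 + 3 * p ^ 3 + 4 * p ^ 2 + 3 * p + 5 := by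
  have : Finite P := Nat.finite_of_card_ne_zero (hP ▸ (pow_pos hp.pos 4).ne')
  let _ : Fintype P := Fintype.ofFinite P
  have h1 := card_subgroups_card_eq_prime_mul_le (G := P) hp
  have h2 := card_subgroups_card_eq_sq_mul_le (G := P) hp
  have h3 := (Nat.mul_le_mul_right (p - 1)
    (card_subgroups_card_eq_pow_le_card_normal_index_eq (n := 3) hp hP)).trans
    (card_normal_index_eq_prime_mul_le hp)
  have h4 := card_subgroups_card_eq_card (G := P)
  rw [hP] at h1 h2 h3 h4
  rw [card_subgroup_eq_sum_card_eq_pow hp hP]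
  simp only [sum_range_succ, sum_range_zero, zero_add, pow_zero, pow_one,
    card_subgroups_card_eq_one, h4]
  have := le_of_mul_sub_one_le_pow_four_sub_one hp.one_lt h1
  have := le_of_mul_le_pow_four_sub_one_mul_sub hp.one_lt h2
  have := le_of_mul_sub_one_le_pow_four_sub_one hp.one_lt h3
  linarith
end

section
/- For every prime p and every even integer a ≥ 6, ∑_{k=0}^a p^{k(a-k)} ≤ 2.129 · p^{a²/4}. -/
/-! Completing the square, `k (2m - k) = m² - (m - k)²`, so the sum is symmetric about `k = m` and
equals `p^(m²) (2 ∑_{j ≤ m} p^(-j²) - 1)`. For `p ≥ 2` the inner sum is at most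
`1 + 1/2 + 1/16 + 1/504`, the tail `j ≥ 3` being dominated by a geometric series of ratio `1/64`;
this gives the constant `2 + 1/8 + 1/252 < 2.129`. -/

open Finset

theorem Finset.sum_range_two_mul_add_one_of_symmetric {M : Type*} [AddCommGroup M]
    (f : ℕ → M) (m : ℕ) (hf : ∀ k ≤ 2 * m, f (2 * m - k) = f k) :
    ∑ k ∈ range (2 * m + 1), f k = 2 • ∑ k ∈ range (m + 1), f k - f m := by
  have upper_half : ∑ i ∈ range m, f (m + 1 + i) = ∑ k ∈ range m, f k := by
    rw [← sum_range_reflect f m]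
    refine sum_congr rfl fun i hi => ?_
    have hi : i < m := mem_range.mp hi
    rw [← hf (m + 1 + i) (by omega)]
    congr 1
    omega
  rw [show 2 * m + 1 = (m + 1) + m by ring, sum_range_add, upper_half, sum_range_succ]
  abel

lemma Nat.sub_mul_two_mul_sub_sub {m j : ℕ} (hj : j ≤ m) :
    (m - j) * (2 * m - (m - j)) = m ^ 2 - j ^ 2 := by
  obtain ⟨d, rfl⟩ : ∃ d, m = j + d := ⟨m - j, by omega⟩
  rw [show j + d - j = d by omega, show 2 * (j + d) - d = 2 * j + d by omega,
    show (j + d) ^ 2 = j ^ 2 + d * (2 * j + d) by ring, Nat.add_sub_cancel_left]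

theorem sum_range_pow_mul_two_mul_sub {K : Type*} [Field K] {x : K} (hx : x ≠ 0) (m : ℕ) :
    ∑ k ∈ range (2 * m + 1), x ^ (k * (2 * m - k)) =
      x ^ (m ^ 2) * (2 * ∑ j ∈ range (m + 1), x⁻¹ ^ (j ^ 2) - 1) := by
  have lower_half : ∑ k ∈ range (m + 1), x ^ (k * (2 * m - k)) =
      x ^ (m ^ 2) * ∑ j ∈ range (m + 1), x⁻¹ ^ (j ^ 2) := by
    rw [← sum_range_reflect, mul_sum]
    refine sum_congr rfl fun j hj => ?_
    have hj : j ≤ m := Nat.lt_succ_iff.mp (mem_range.mp hj)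
    rw [Nat.add_sub_cancel, Nat.sub_mul_two_mul_sub_sub hj,
      pow_sub₀ x hx (Nat.pow_le_pow_left hj 2), inv_pow]
  rw [sum_range_two_mul_add_one_of_symmetric _ m fun k hk => by
      rw [Nat.sub_sub_self hk, mul_comm], lower_half, two_mul m, Nat.add_sub_cancel, ← sq,
    nsmul_eq_mul]
  push_cast
  ring

lemma sum_range_half_pow_sq_le (n : ℕ) :
    ∑ j ∈ range n, (1 / 2 : ℝ) ^ (j ^ 2) ≤ 1 + 1 / 2 + 1 / 16 + 1 / 504 := by
  have tail : ∑ j ∈ Ico 3 (n + 3), (1 / 2 : ℝ) ^ (j ^ 2) ≤ 1 / 504 :=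
    calc ∑ j ∈ Ico 3 (n + 3), (1 / 2 : ℝ) ^ (j ^ 2)
        ≤ ∑ j ∈ Ico 3 (n + 3), 2 ^ 9 * (1 / 64 : ℝ) ^ j := by
          refine sum_le_sum fun j hj => ?_
          have hj : 3 ≤ j := (mem_Ico.mp hj).1
          -- `j² ≥ 6j - 9`, i.e. `(j - 3)² ≥ 0`
          calc (1 / 2 : ℝ) ^ (j ^ 2) ≤ (1 / 2) ^ (6 * j - 9) :=
                pow_le_pow_of_le_one (by norm_num) (by norm_num)
                  (Nat.sub_le_iff_le_add.mpr (by nlinarith))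
            _ = 2 ^ 9 * (1 / 64) ^ j := by
                rw [show (1 / 64 : ℝ) = (1 / 2) ^ 6 by norm_num, ← pow_mul]
                conv_rhs => rw [← Nat.add_sub_cancel' (show 9 ≤ 6 * j by omega), pow_add]
                rw [← mul_assoc]
                norm_num
      _ ≤ 2 ^ 9 * ((1 / 64) ^ 3 / (1 - 1 / 64)) := by
          rw [← mul_sum]
          gcongr
          exact geom_sum_Ico_le_of_lt_one (by norm_num) (by norm_num)
      _ = 1 / 504 := by norm_num
  calc ∑ j ∈ range n, (1 / 2 : ℝ) ^ (j ^ 2)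
      ≤ ∑ j ∈ range (n + 3), (1 / 2 : ℝ) ^ (j ^ 2) :=
        sum_le_sum_of_subset_of_nonneg (range_mono (by omega)) fun _ _ _ => by positivity
    _ = ∑ j ∈ range 3, (1 / 2 : ℝ) ^ (j ^ 2) + ∑ j ∈ Ico 3 (n + 3), (1 / 2 : ℝ) ^ (j ^ 2) :=
        (sum_range_add_sum_Ico _ (by omega)).symm
    _ ≤ 1 + 1 / 2 + 1 / 16 + 1 / 504 := by
        simp only [sum_range_succ, sum_range_zero]
        norm_num at tail ⊢
        linarith

lemma sum_range_pow_sq_le_of_le_half {x : ℝ} (hx₀ : 0 ≤ x) (hx : x ≤ 1 / 2) (n : ℕ) :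
    ∑ j ∈ range n, x ^ (j ^ 2) ≤ 1 + 1 / 2 + 1 / 16 + 1 / 504 :=
  (sum_le_sum fun _ _ => by gcongr).trans (sum_range_half_pow_sq_le n)

theorem sum_pow_even_general (p : ℕ) (hp : p.Prime) (a : ℕ) (hev : Even a) :
    ∑ k ∈ Finset.range (a + 1), (p : ℝ) ^ (k * (a - k)) ≤
      2.129 * (p : ℝ) ^ ((a : ℝ) ^ 2 / 4) := by
  obtain ⟨m, rfl⟩ := hev
  have hp_two : (2 : ℝ) ≤ p := by exact_mod_cast hp.two_le
  have theta_le := sum_range_pow_sq_le_of_le_half (x := (p : ℝ)⁻¹) (by positivity)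
    (by rw [one_div]; exact inv_anti₀ (by norm_num) hp_two) (m + 1)
  have rpow_eq : (p : ℝ) ^ (((m + m : ℕ) : ℝ) ^ 2 / 4) = (p : ℝ) ^ (m ^ 2) := by
    rw [← Real.rpow_natCast _ (m ^ 2)]
    congr 1
    push_cast
    ring
  rw [rpow_eq, ← two_mul, sum_range_pow_mul_two_mul_sub (by positivity), mul_comm (2.129 : ℝ)]
  gcongr
  linarith

theorem sum_pow_even (p : ℕ) (hp : p.Prime) (a : ℕ) (hev : Even a) (ha : 6 ≤ a) :
    ∑ k ∈ Finset.range (a + 1), (p : ℝ) ^ (k * (a - k)) ≤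
      2.129 * (p : ℝ) ^ ((a : ℝ) ^ 2 / 4) :=
  sum_pow_even_general p hp a hev
end

section
/- For every prime p and every odd integer a ≥ 6 (i.e., a ≥ 7 odd), ∑_{k=0}^a p^{k(a-k)} ≤ 2.53175 · p^{(a²-1)/4} ≤ 2.129 · p^{a²/4}. -/
/-!
Write `a = 2m + 1`. The exponents `k (a - k)` are symmetric under `k ↦ a - k` and, for `k = m - j`,
equal `m (m + 1) - j (j + 1)`; so the sum is `2 p^{m(m+1)} ∑_{j ≤ m} p^{-j(j+1)}`, and
`(a² - 1)/4 = m (m + 1)`. For `p ≥ 2` the last sum is at most `∑_j 2^{-j(j+1)} < 1.265875`.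
The second inequality is `2.53175 / 2.129 ≤ 2^{1/4}`, i.e. `(2.53175 / 2.129)^4 ≤ 2`.
-/

open Finset

lemma Nat.sub_mul_add_one_add {m j : ℕ} (hj : j ≤ m) :
    (m - j) * (m + 1 + j) = m * (m + 1) - j * (j + 1) := by
  obtain ⟨d, rfl⟩ := Nat.exists_eq_add_of_le hj
  rw [Nat.add_sub_cancel_left]
  refine (Nat.sub_eq_of_eq_add ?_).symm
  ring

lemma Finset.sum_range_mul_sub_odd {M : Type*} [AddCommMonoid M] (f : ℕ → M) (m : ℕ) :
    ∑ k ∈ range (2 * m + 1 + 1), f (k * (2 * m + 1 - k)) =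
      2 • ∑ j ∈ range (m + 1), f (m * (m + 1) - j * (j + 1)) := by
  rw [show 2 * m + 1 + 1 = (m + 1) + (m + 1) by ring, sum_range_add,
    ← sum_range_reflect _ (m + 1), two_nsmul]
  congr 1 <;> refine sum_congr rfl fun j hj => congrArg f ?_
  all_goals
    have hj : j ≤ m := mem_range_succ_iff.mp hj
    rw [← Nat.sub_mul_add_one_add hj]
  · rw [show 2 * m + 1 - (m + 1 - 1 - j) = m + 1 + j by omega, Nat.add_sub_cancel]
  · rw [show 2 * m + 1 - (m + 1 + j) = m - j by omega, mul_comm]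

lemma sum_range_inv_two_pow_mul_succ_le (n : ℕ) :
    ∑ j ∈ range n, (2⁻¹ : ℝ) ^ (j * (j + 1)) ≤ 1.265875 := by
  have hhead : ∑ j ∈ range 4, (2⁻¹ : ℝ) ^ (j * (j + 1)) = 5185 / 4096 := by
    norm_num [sum_range_succ]
  -- from index 4 on, `j (j + 1) ≥ 5 j`, so the tail is dominated by a geometric series
  have htail : ∑ j ∈ Ico 4 (n + 4), (2⁻¹ : ℝ) ^ (j * (j + 1)) ≤ (32⁻¹) ^ 4 / (1 - 32⁻¹) := by
    refine le_trans (sum_le_sum fun j hj => ?_) (geom_sum_Ico_le_of_lt_one (by norm_num) (by norm_num))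
    rw [show (32⁻¹ : ℝ) = 2⁻¹ ^ 5 by norm_num, ← pow_mul]
    exact pow_le_pow_of_le_one (by norm_num) (by norm_num) (by nlinarith [(mem_Ico.mp hj).1])
  calc ∑ j ∈ range n, (2⁻¹ : ℝ) ^ (j * (j + 1))
      ≤ ∑ j ∈ range (n + 4), (2⁻¹ : ℝ) ^ (j * (j + 1)) :=
        sum_le_sum_of_subset_of_nonneg (range_subset_range.mpr (by omega)) fun _ _ _ => by positivity
    _ = 5185 / 4096 + ∑ j ∈ Ico 4 (n + 4), (2⁻¹ : ℝ) ^ (j * (j + 1)) := by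
        rw [← sum_range_add_sum_Ico _ (by omega : 4 ≤ n + 4), hhead]
    _ ≤ 1.265875 := by linarith

lemma sum_range_pow_mul_sub_odd_le {x : ℝ} (hx : 2 ≤ x) (m : ℕ) :
    ∑ k ∈ range (2 * m + 1 + 1), x ^ (k * (2 * m + 1 - k)) ≤ 2.53175 * x ^ (m * (m + 1)) := by
  have hterm : ∀ j ∈ range (m + 1),
      x ^ (m * (m + 1) - j * (j + 1)) ≤ x ^ (m * (m + 1)) * 2⁻¹ ^ (j * (j + 1)) := by
    intro j hj
    have hj : j ≤ m := mem_range_succ_iff.mp hj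
    rw [pow_sub₀ x (by positivity) (Nat.mul_le_mul hj (by omega)), ← inv_pow]
    gcongr
  calc ∑ k ∈ range (2 * m + 1 + 1), x ^ (k * (2 * m + 1 - k))
      = 2 * ∑ j ∈ range (m + 1), x ^ (m * (m + 1) - j * (j + 1)) := by
        rw [sum_range_mul_sub_odd (x ^ ·), nsmul_eq_mul, Nat.cast_ofNat]
    _ ≤ 2 * (x ^ (m * (m + 1)) * ∑ j ∈ range (m + 1), 2⁻¹ ^ (j * (j + 1))) := by
        gcongr 2 * ?_
        rw [mul_sum]
        exact sum_le_sum hterm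
    _ ≤ 2 * (x ^ (m * (m + 1)) * 1.265875) := by
        gcongr; exact sum_range_inv_two_pow_mul_succ_le _
    _ = 2.53175 * x ^ (m * (m + 1)) := by ring

lemma le_mul_rpow_quarter {x : ℝ} (hx : 2 ≤ x) : (2.53175 : ℝ) ≤ 2.129 * x ^ (4⁻¹ : ℝ) := by
  have hc : (2.53175 / 2.129 : ℝ) ≤ x ^ (4⁻¹ : ℝ) :=
    calc (2.53175 / 2.129 : ℝ) = ((2.53175 / 2.129) ^ 4) ^ ((4 : ℕ)⁻¹ : ℝ) :=
          (Real.pow_rpow_inv_natCast (by norm_num) (by norm_num)).symm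
      _ ≤ x ^ (4⁻¹ : ℝ) := by
          push_cast
          exact Real.rpow_le_rpow (by positivity) (by norm_num; linarith) (by norm_num)
  rw [div_le_iff₀ (by norm_num)] at hc
  linarith

theorem sum_pow_odd_general (p : ℕ) (hp : p.Prime) (a : ℕ) (hodd : Odd a) :
    ∑ k ∈ Finset.range (a + 1), (p : ℝ) ^ (k * (a - k)) ≤
        2.53175 * (p : ℝ) ^ (((a : ℝ) ^ 2 - 1) / 4) ∧
      2.53175 * (p : ℝ) ^ (((a : ℝ) ^ 2 - 1) / 4) ≤
        2.129 * (p : ℝ) ^ ((a : ℝ) ^ 2 / 4) := by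
  obtain ⟨m, rfl⟩ := hodd
  have hp2 : (2 : ℝ) ≤ p := mod_cast hp.two_le
  have hexp : (((2 * m + 1 : ℕ) : ℝ) ^ 2 - 1) / 4 = (m * (m + 1) : ℕ) := by push_cast; ring
  have hexp' : ((2 * m + 1 : ℕ) : ℝ) ^ 2 / 4 = (m * (m + 1) : ℕ) + 4⁻¹ := by push_cast; ring
  rw [hexp, hexp', Real.rpow_add (by linarith), Real.rpow_natCast]
  refine ⟨sum_range_pow_mul_sub_odd_le hp2 m, ?_⟩
  calc 2.53175 * (p : ℝ) ^ (m * (m + 1))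
      ≤ 2.129 * (p : ℝ) ^ (4⁻¹ : ℝ) * (p : ℝ) ^ (m * (m + 1)) := by
        gcongr; exact le_mul_rpow_quarter hp2
    _ = _ := by ring

theorem sum_pow_odd (p : ℕ) (hp : p.Prime) (a : ℕ) (hodd : Odd a) (ha : 6 ≤ a) :
    ∑ k ∈ Finset.range (a + 1), (p : ℝ) ^ (k * (a - k)) ≤
        2.53175 * (p : ℝ) ^ (((a : ℝ) ^ 2 - 1) / 4) ∧
      2.53175 * (p : ℝ) ^ (((a : ℝ) ^ 2 - 1) / 4) ≤
        2.129 * (p : ℝ) ^ ((a : ℝ) ^ 2 / 4) :=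
  sum_pow_odd_general p hp a hodd
end

section
/- Let p ≥ 5 be a prime and let R be a finite group with cyclic Sylow p-subgroup P of order p such that the normalizer of P in R equals its centralizer. Then R has a normal subgroup N with R = NP and N ∩ P = 1, and if N has exactly x subgroups then R has at most x(1 + |R|/p) subgroups. -/
/-!
Burnside's transfer theorem gives a normal complement `N` of `P`. Since `P` is a Hall subgroup,
`N` complements every Sylow `p`-subgroup, and `N` has prime index `p`. A subgroup `H ≰ N` therefore
has order divisible by `p`, so it contains a Sylow subgroup `Q`, and the modular law gives
`H = (H ⊓ N) ⊔ Q`. Hence every subgroup of `R` is either a subgroup of `N` or determined by a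
subgroup of `N` together with one of the at most `|R|/p` Sylow `p`-subgroups.
-/

open Subgroup
open scoped Pointwise

namespace Subgroup

variable {G : Type*} [Group G]

theorem inf_sup_eq_of_le {N Q H : Subgroup G} [N.Normal] (hNQ : N ⊔ Q = ⊤) (hQH : Q ≤ H) :
    H ⊓ N ⊔ Q = H := by
  refine le_antisymm (sup_le inf_le_left hQH) fun h hh => ?_
  have : h ∈ ((H ⊓ N : Subgroup G) : Set G) * (Q : Set G) := by
    rw [inf_mul_assoc _ _ _ hQH, ← normal_mul, hNQ]
    exact ⟨hh, trivial⟩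
  obtain ⟨n, hn, q, hq, rfl⟩ := this
  exact mul_mem_sup hn hq

theorem prime_dvd_card_of_not_le {N H : Subgroup G} [N.Normal] {p : ℕ} (hp : p.Prime)
    (hN : N.index = p) (hHN : ¬H ≤ N) : p ∣ Nat.card H := by
  have hrel : N.relIndex H = p :=
    ((Nat.dvd_prime hp).mp (hN ▸ relIndex_dvd_index_of_normal N H)).resolve_left
      (mt relIndex_eq_one.mp hHN)
  exact hrel ▸ relIndex_dvd_card N H

theorem card_subgroup_le_of_forall_le_or_inf_sup_eq [Finite G] {ι : Type*} [Finite ι]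
    (N : Subgroup G) (Q : ι → Subgroup G) (hQ : ∀ H : Subgroup G, H ≤ N ∨ ∃ i, H ⊓ N ⊔ Q i = H) :
    Nat.card (Subgroup G) ≤ Nat.card (Subgroup N) * (1 + Nat.card ι) := by
  let f : Subgroup N × Option ι → Subgroup G := fun ⟨K, i⟩ =>
    i.elim (K.map N.subtype) (K.map N.subtype ⊔ Q ·)
  have hf : Function.Surjective f := by
    intro H
    have hmap : ∀ {K : Subgroup G}, K ≤ N → (K.subgroupOf N).map N.subtype = K := fun hK => by
      rw [subgroupOf_map_subtype, inf_eq_left.mpr hK]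
    rcases hQ H with hHN | ⟨i, hi⟩
    · exact ⟨(H.subgroupOf N, none), hmap hHN⟩
    · refine ⟨((H ⊓ N).subgroupOf N, some i), ?_⟩
      simp only [f, Option.elim_some, hmap inf_le_right, hi]
  calc Nat.card (Subgroup G) ≤ Nat.card (Subgroup N × Option ι) :=
        Nat.card_le_card_of_surjective f hf
    _ = Nat.card (Subgroup N) * (1 + Nat.card ι) := by
        rw [Nat.card_prod, Finite.card_option, add_comm]

end Subgroup

namespace Sylow

variable {G : Type*} [Group G] [Finite G] {p : ℕ} [Fact p.Prime]

theorem isComplement'_of_isComplement' {N : Subgroup G} {P : Sylow p G}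
    (h : IsComplement' N P) (Q : Sylow p G) : IsComplement' N Q := by
  have hQ : Nat.card Q = Nat.card P := by rw [card_eq_multiplicity, card_eq_multiplicity]
  refine isComplement'_of_coprime (by rw [hQ, h.card_mul_card]) ?_
  rw [hQ, ← h.index_eq_card]
  exact P.card_coprime_index.symm

theorem exists_le_of_dvd_card {P : Sylow p G} (hP : Nat.card P = p) {H : Subgroup G}
    (hpH : p ∣ Nat.card H) : ∃ Q : Sylow p G, (Q : Subgroup G) ≤ H := by
  obtain ⟨K, hK⟩ := Sylow.exists_subgroup_card_pow_prime (G := H) p (n := 1) (by rwa [pow_one])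
  have hK' : Nat.card (K.map H.subtype) = p := by
    rw [card_map_of_injective H.subtype_injective, hK, pow_one]
  obtain ⟨Q, hKQ⟩ := (IsPGroup.of_card (n := 1) (by rw [hK', pow_one])).exists_le_sylow
  have hQ : Nat.card Q = p := by rw [card_eq_multiplicity, ← P.card_eq_multiplicity, hP]
  refine ⟨Q, ?_⟩
  rw [← eq_of_le_of_card_ge hKQ (by rw [hQ, hK'])]
  exact map_subtype_le K

end Sylow

theorem burnside_complement_subgroup_bound_general (R : Type*) [Group R] [Finite R]
    (p : ℕ) (hp : p.Prime) (P : Sylow p R)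
    (hcard : Nat.card P = p)
    (hNC : Subgroup.normalizer ((P : Subgroup R) : Set R) = Subgroup.centralizer (P : Set R)) :
    ∃ N : Subgroup R, N.Normal ∧ N ⊔ (P : Subgroup R) = ⊤ ∧
      N ⊓ (P : Subgroup R) = ⊥ ∧
      Nat.card (Subgroup R) ≤ Nat.card (Subgroup N) * (1 + Nat.card R / p) := by
  have : Fact p.Prime := ⟨hp⟩
  set N := (MonoidHom.transferSylow P hNC.le).ker
  have hcomp : IsComplement' N P := MonoidHom.ker_transferSylow_isComplement' P hNC.le
  have hindex : N.index = p := by rw [hcomp.symm.index_eq_card, hcard]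
  have hsplit : ∀ H : Subgroup R, H ≤ N ∨ ∃ Q : Sylow p R, H ⊓ N ⊔ Q = H := by
    refine fun H => or_iff_not_imp_left.mpr fun hHN => ?_
    obtain ⟨Q, hQH⟩ := P.exists_le_of_dvd_card hcard (prime_dvd_card_of_not_le hp hindex hHN)
    exact ⟨Q, inf_sup_eq_of_le (P.isComplement'_of_isComplement' hcomp Q).sup_eq_top hQH⟩
  have hsylow : Nat.card (Sylow p R) ≤ Nat.card R / p := by
    rw [← index_mul_card (P : Subgroup R), hcard, Nat.mul_div_cancel _ hp.pos]
    exact Nat.le_of_dvd (Nat.pos_of_ne_zero index_ne_zero_of_finite) P.card_dvd_index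
  refine ⟨N, inferInstance, hcomp.sup_eq_top, hcomp.disjoint.eq_bot, ?_⟩
  calc Nat.card (Subgroup R) ≤ Nat.card (Subgroup N) * (1 + Nat.card (Sylow p R)) :=
        card_subgroup_le_of_forall_le_or_inf_sup_eq N _ hsplit
    _ ≤ Nat.card (Subgroup N) * (1 + Nat.card R / p) := by gcongr

theorem burnside_complement_subgroup_bound (R : Type*) [Group R] [Finite R]
    (p : ℕ) (hp : p.Prime) (h5 : 5 ≤ p) (P : Sylow p R)
    (hcard : Nat.card P = p)
    (hNC : Subgroup.normalizer ((P : Subgroup R) : Set R) = Subgroup.centralizer (P : Set R)) :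
    ∃ N : Subgroup R, N.Normal ∧ N ⊔ (P : Subgroup R) = ⊤ ∧
      N ⊓ (P : Subgroup R) = ⊥ ∧
      Nat.card (Subgroup R) ≤ Nat.card (Subgroup N) * (1 + Nat.card R / p) :=
  burnside_complement_subgroup_bound_general R p hp P hcard hNC
end

section
/- Let R be a finite group of order r = ∏_{i=1}^ℓ p_i^{a_i} (distinct primes p_i), and for each i let S_i be an upper bound on the number of subgroups of any group of order p_i^{a_i}. Then R has at most r^{ℓ-1} · ∏_{i=1}^ℓ S_i subgroups. -/
/-!
For each prime `p ∣ r`, a subgroup `H ≤ R` contains a Sylow `p`-subgroup `Q_p` of `H`, which lies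
in some Sylow `p`-subgroup `P_p` of `R`. The pairs `(P_p, Q_p)` determine `H`, because a subgroup of
`H` containing a Sylow subgroup of `H` for every prime has order divisible by `|H|`. There are at
most `r / p^{a_p}` choices of `P_p` (their number divides its index) and at most `S p` of `Q_p ≤ P_p`,
and `∏_p r / p^{a_p} = r^{ℓ-1}`.
-/

theorem card_subgroup_le_of_card_eq {n b : ℕ}
    (h : ∀ (P : Type) [Group P], Nat.card P = n → Nat.card (Subgroup P) ≤ b)
    (G : Type*) [Group G] [Finite G] (hG : Nat.card G = n) :
    Nat.card (Subgroup G) ≤ b := by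
  let e : Fin (Nat.card G) ≃ G := (Finite.equivFin G).symm
  let : Group (Fin (Nat.card G)) := e.group
  calc Nat.card (Subgroup G) = Nat.card (Subgroup (Fin (Nat.card G))) :=
        Nat.card_congr e.mulEquiv.comapSubgroup.toEquiv
    _ ≤ b := h _ (by rw [Nat.card_fin, hG])

theorem Nat.card_sigma_le_mul {α : Type*} {β : α → Type*} [Finite α] [∀ a, Finite (β a)]
    {b : ℕ} (h : ∀ a, Nat.card (β a) ≤ b) : Nat.card (Σ a, β a) ≤ Nat.card α * b := by
  have := Fintype.ofFinite α
  rw [Nat.card_sigma, Nat.card_eq_fintype_card, ← smul_eq_mul, ← Finset.card_univ,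
    ← Finset.sum_const]
  exact Finset.sum_le_sum fun a _ => h a

theorem Nat.prod_primeFactors_div_ordProj {n : ℕ} (hn : n ≠ 0) :
    ∏ p ∈ n.primeFactors, n / ordProj[p] n = n ^ (n.primeFactors.card - 1) := by
  rcases n.primeFactors.eq_empty_or_nonempty with h | h
  · simp [h]
  refine Nat.eq_of_mul_eq_mul_right (Nat.pos_of_ne_zero hn) ?_
  calc (∏ p ∈ n.primeFactors, n / ordProj[p] n) * n
      = ∏ p ∈ n.primeFactors, n / ordProj[p] n * ordProj[p] n := by
        rw [Finset.prod_mul_distrib, ← Nat.prod_primeFactors_pow_factorization hn]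
    _ = n ^ n.primeFactors.card := by
        simp [Nat.div_mul_cancel (Nat.ordProj_dvd n _)]
    _ = n ^ (n.primeFactors.card - 1) * n := by
        rw [← pow_succ, Nat.sub_add_cancel h.card_pos]

namespace Subgroup

variable {G : Type*} [Group G] [Finite G]

theorem eq_of_le_of_forall_ordProj_dvd {H K : Subgroup G} (hKH : K ≤ H)
    (hK : ∀ p ∈ (Nat.card H).primeFactors, ordProj[p] (Nat.card H) ∣ Nat.card K) : K = H := by
  have hH0 : Nat.card H ≠ 0 := Nat.card_pos.ne'
  have hK0 : Nat.card K ≠ 0 := Nat.card_pos.ne'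
  have hdvd : Nat.card H ∣ Nat.card K := by
    rw [← Nat.factorization_le_iff_dvd hH0 hK0, Finsupp.le_iff, Nat.support_factorization]
    exact fun p hp =>
      ((Nat.prime_of_mem_primeFactors hp).pow_dvd_iff_le_factorization hK0).1 (hK p hp)
  exact eq_of_le_of_card_ge hKH (Nat.le_of_dvd Nat.card_pos hdvd)

theorem exists_sylow_subgroup_map_le (H : Subgroup G) (p : ℕ) [Fact p.Prime] :
    ∃ (P : Sylow p G) (Q : Subgroup P),
      Q.map (P : Subgroup G).subtype ≤ H ∧ Nat.card Q = ordProj[p] (Nat.card H) := by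
  obtain ⟨Q₀⟩ : Nonempty (Sylow p H) := inferInstance
  obtain ⟨P, hP⟩ := (Q₀.isPGroup'.map H.subtype).exists_le_sylow
  refine ⟨P, (Q₀.map H.subtype).subgroupOf P, ?_, ?_⟩
  · rw [subgroupOf_map_subtype, inf_of_le_left hP]
    exact map_subtype_le _
  · rw [← card_map_of_injective (P : Subgroup G).subtype_injective, subgroupOf_map_subtype,
      inf_of_le_left hP, card_map_of_injective H.subtype_injective]
    exact Q₀.card_eq_multiplicity

theorem card_le_prod_card_sigma_sylow :
    Nat.card (Subgroup G) ≤
      ∏ p ∈ (Nat.card G).primeFactors, Nat.card (Σ P : Sylow p G, Subgroup P) := by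
  choose P Q hQH hQcard using fun (H : Subgroup G) (p : (Nat.card G).primeFactors) =>
    haveI : Fact p.1.Prime := ⟨Nat.prime_of_mem_primeFactors p.2⟩
    H.exists_sylow_subgroup_map_le p
  let code (H : Subgroup G) (p : (Nat.card G).primeFactors) : Σ P : Sylow p G, Subgroup P :=
    ⟨P H p, Q H p⟩
  have hinf : ∀ H K, code H = code K → H ⊓ K = H := fun H K hHK =>
    eq_of_le_of_forall_ordProj_dvd inf_le_left fun p hp => by
      have hpG : p ∈ (Nat.card G).primeFactors :=
        Nat.primeFactors_mono (card_subgroup_dvd_card H) Nat.card_pos.ne' hp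
      have hsame := congrArg (fun x : Σ P : Sylow p G, Subgroup P =>
        x.2.map (x.1 : Subgroup G).subtype) (congrFun hHK ⟨p, hpG⟩)
      rw [← hQcard H ⟨p, hpG⟩, ← card_map_of_injective (subtype_injective _)]
      exact card_dvd_of_le (le_inf (hQH H _) (hsame ▸ hQH K _))
  have hinj : Function.Injective code := fun H K hHK =>
    (hinf H K hHK).symm.trans (inf_comm H K ▸ hinf K H hHK.symm)
  calc Nat.card (Subgroup G)
      ≤ Nat.card (∀ p : (Nat.card G).primeFactors, Σ P : Sylow p G, Subgroup P) :=
        Nat.card_le_card_of_injective code hinj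
    _ = _ := Nat.card_pi.trans
        (Finset.prod_coe_sort _ fun p => Nat.card (Σ P : Sylow p G, Subgroup P))

end Subgroup

theorem Sylow.card_le_div_ordProj {G : Type*} [Group G] [Finite G] (p : ℕ) [Fact p.Prime] :
    Nat.card (Sylow p G) ≤ Nat.card G / ordProj[p] (Nat.card G) := by
  obtain ⟨P⟩ : Nonempty (Sylow p G) := inferInstance
  have hindex : (P : Subgroup G).index = Nat.card G / ordProj[p] (Nat.card G) := by
    rw [← P.card_eq_multiplicity, ← (P : Subgroup G).card_mul_index,
      Nat.mul_div_cancel_left _ Nat.card_pos]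
  exact hindex ▸ Nat.le_of_dvd (Nat.pos_of_ne_zero (P : Subgroup G).index_ne_zero_of_finite)
    P.card_dvd_index

theorem subgroup_count_sylow_bound (R : Type*) [Group R] [Finite R]
    (S : ℕ → ℕ)
    (hS : ∀ p : ℕ, p.Prime → ∀ (P : Type) [Group P],
      Nat.card P = p ^ ((Nat.card R).factorization p) →
        Nat.card (Subgroup P) ≤ S p) :
    Nat.card (Subgroup R) ≤
      (Nat.card R) ^ ((Nat.card R).primeFactors.card - 1) *
        ∏ p ∈ (Nat.card R).primeFactors, S p := by
  calc Nat.card (Subgroup R)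
      ≤ ∏ p ∈ (Nat.card R).primeFactors, Nat.card (Σ P : Sylow p R, Subgroup P) :=
        Subgroup.card_le_prod_card_sigma_sylow
    _ ≤ ∏ p ∈ (Nat.card R).primeFactors, Nat.card R / ordProj[p] (Nat.card R) * S p := by
        refine Finset.prod_le_prod' fun p hp => ?_
        have hp : p.Prime := Nat.prime_of_mem_primeFactors hp
        have : Fact p.Prime := ⟨hp⟩
        exact (Nat.card_sigma_le_mul fun P : Sylow p R =>
            card_subgroup_le_of_card_eq (hS p hp) P P.card_eq_multiplicity).trans
          (Nat.mul_le_mul_right _ (Sylow.card_le_div_ordProj p))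
    _ = _ := by
        rw [Finset.prod_mul_distrib, Nat.prod_primeFactors_div_ordProj Nat.card_pos.ne']
end
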